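/- arXiv:1612.06898 — 4 statements merged into one kernel-verified Lean document; each statement's English description precedes it below -/
import Mathlib

section
/- Let $n \geq 2$ and $N = 2^n - 1$. For $h \in \{1,\dots,N\}$ write $h = \sum_{j=1}^n \varepsilon_j(h) 2^{j-1}$ with $\varepsilon_j(h) \in \{0,1\}$, and say $h \preceq \ell$ if $\varepsilon_j(h) \leq \varepsilon_j(\ell)$ for all $j$. Call an $N$-tuple $(z_1,\dots,z_N)$ of positive integers reduced if $\gcd(z_h, z_\ell) = 1$ whenever $h \not\preceq \ell$ and $\ell \not\preceq h$. Then the map sending a reduced $N$-tuple $(z_1,\dots,z_N)$ to $(y_1,\dots,y_n)$ where $y_j = \prod_{h=1}^N z_h^{\varepsilon_j(h)}$ is a bijection from the set of reduced $N$-tuples of positive integers onto the set of $n$-tuples of positive integers. -/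
/-- `j`-th binary digit (zero-based) of `h`, as `0` or `1`; `epsb h (j-1)` is the
paper's `ε_j(h)`. -/
def epsb (h j : ℕ) : ℕ := if h.testBit j then 1 else 0

/-- Domination order: every binary digit of `h` (among the first `n`) is at most that of `ℓ`. -/
def Dom (n h ℓ : ℕ) : Prop := ∀ j < n, epsb h j ≤ epsb ℓ j

/-- A tuple indexed by `Fin (2^n - 1)` (index `h` standing for `h+1 ∈ {1,…,2^n-1}`)
is reduced if entries at incomparable indices are coprime. -/
def Reduced (n : ℕ) (z : Fin (2^n - 1) → ℕ) : Prop :=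
  ∀ h ℓ : Fin (2^n - 1), ¬ Dom n (h.1+1) (ℓ.1+1) → ¬ Dom n (ℓ.1+1) (h.1+1) →
    Nat.gcd (z h) (z ℓ) = 1

/-!
The statement is multiplicative, so we argue one prime `p` at a time. For a reduced tuple `z`,
the valuations `c_h = v_p(z_h)` are nonzero only on a chain of digit sets
`S_h = {j | ε_j(h) = 1}`, and `a_j = v_p(y_j) = ∑_{S_h ∋ j} c_h`. A decomposition of `a` along a
chain of sets is unique: it is the layer-cake decomposition `a = ∑_{t ≥ 1} 1_{a ≥ t}`, in which a
set `S` gets the weight `layer a S`, the number of levels `t` whose level set `{a ≥ t}` is `S`.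
Conversely, building `z_h` prime by prime from these weights gives a preimage of `y`, and it is
reduced because level sets are nested.
-/

open Finset

section LayerCake

variable {ι : Type*} [Fintype ι]

def levelSet (a : ι → ℕ) (t : ℕ) : Finset ι := {j | t ≤ a j}

@[simp] lemma mem_levelSet {a : ι → ℕ} {t : ℕ} {j : ι} : j ∈ levelSet a t ↔ t ≤ a j := by
  simp [levelSet]

lemma levelSet_antitone (a : ι → ℕ) : Antitone (levelSet a) :=
  fun _ _ hst _ hj => mem_levelSet.2 (hst.trans (mem_levelSet.1 hj))

variable [DecidableEq ι]

def layer (a : ι → ℕ) (S : Finset ι) : ℕ := #{t ∈ Icc 1 (univ.sup a) | levelSet a t = S}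

lemma layer_zero (S : Finset ι) : layer 0 S = 0 := by
  simp [layer]

lemma exists_levelSet_eq_of_layer_ne_zero {a : ι → ℕ} {S : Finset ι} (h : layer a S ≠ 0) :
    ∃ t, levelSet a t = S := by
  obtain ⟨t, ht⟩ := card_ne_zero.1 h
  exact ⟨t, (mem_filter.1 ht).2⟩

lemma sum_layer_of_mem (a : ι → ℕ) (j : ι) : ∑ S with j ∈ S, layer a S = a j := by
  set M := univ.sup a
  have hM : a j ≤ M := le_sup (mem_univ j)
  calc ∑ S with j ∈ S, layer a S
      = ∑ S with j ∈ S, #{t ∈ {t ∈ Icc 1 M | j ∈ levelSet a t} | levelSet a t = S} := by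
        refine sum_congr rfl fun S hS => congrArg card ?_
        rw [filter_filter]
        refine filter_congr fun t _ => ⟨fun h => ⟨h ▸ (mem_filter.1 hS).2, h⟩, And.right⟩
    _ = #{t ∈ Icc 1 M | j ∈ levelSet a t} :=
        (card_eq_sum_card_fiberwise fun t ht => by simpa using (mem_filter.1 ht).2).symm
    _ = #(Icc 1 (a j)) := by
        congr 1
        ext t
        simp only [mem_filter, mem_Icc, mem_levelSet]
        omega
    _ = a j := by simp

lemma sum_card_mul_eq_sum_sum_mem (w : Finset ι → ℕ) :
    ∑ S, #S * w S = ∑ j, ∑ S with j ∈ S, w S := by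
  simp only [sum_filter]
  rw [sum_comm]
  refine sum_congr rfl fun S _ => ?_
  rw [← sum_filter, sum_const, smul_eq_mul, filter_mem_eq_inter, univ_inter]

lemma le_layer_of_chain {c : Finset ι → ℕ} (hc : ∀ S T, c S ≠ 0 → c T ≠ 0 → S ⊆ T ∨ T ⊆ S)
    {a : ι → ℕ} (ha : ∀ j, a j = ∑ S with j ∈ S, c S) {S : Finset ι} (hS : S.Nonempty) :
    c S ≤ layer a S := by
  rcases eq_or_ne (c S) 0 with h0 | h0
  · simp [h0]
  -- With `D` the total weight of the supersets of `S`, every level in `(D - c S, D]` has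
  -- level set exactly `S`.
  have hD : c S + ∑ T with S ⊂ T, c T = ∑ T with S ⊆ T, c T := by
    rw [← add_sum_erase _ c (mem_filter.2 ⟨mem_univ S, subset_refl S⟩)]
    congr 2
    ext T
    simp [ssubset_iff_subset_ne, eq_comm, and_comm]
  set D := ∑ T with S ⊆ T, c T
  have h_in : ∀ j ∈ S, D ≤ a j := fun j hj => by
    rw [ha]
    refine sum_le_sum_of_subset fun T => ?_
    simp only [mem_filter, mem_univ, true_and]
    exact fun hST => hST hj
  have h_out : ∀ j ∉ S, a j + c S ≤ D := fun j hj => by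
    suffices a j ≤ ∑ T with S ⊂ T, c T by omega
    rw [ha, sum_filter, sum_filter]
    refine sum_le_sum fun T _ => ?_
    by_cases hjT : j ∈ T
    · rcases eq_or_ne (c T) 0 with hT | hT
      · simp [hT]
      have hST : S ⊂ T := ((hc T S hT h0).resolve_left fun h => hj (h hjT)).ssubset_of_ne
        (by rintro rfl; exact hj hjT)
      simp [hjT, hST]
    · simp [hjT]
  obtain ⟨i, hi⟩ := hS
  have hsub : Ioc (D - c S) D ⊆ {t ∈ Icc 1 (univ.sup a) | levelSet a t = S} := by
    intro t ht
    rw [mem_Ioc] at ht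
    have hta : t ≤ univ.sup a := ht.2.trans ((h_in i hi).trans (le_sup (mem_univ i)))
    refine mem_filter.2 ⟨mem_Icc.2 ⟨by omega, hta⟩, ?_⟩
    ext j
    rw [mem_levelSet]
    constructor
    · intro htj
      by_contra hj
      have := h_out j hj
      omega
    · intro hj
      have := h_in j hj
      omega
  calc c S = #(Ioc (D - c S) D) := by rw [Nat.card_Ioc]; omega
    _ ≤ layer a S := card_le_card hsub

lemma eq_layer_of_chain {c : Finset ι → ℕ} (hc : ∀ S T, c S ≠ 0 → c T ≠ 0 → S ⊆ T ∨ T ⊆ S)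
    {a : ι → ℕ} (ha : ∀ j, a j = ∑ S with j ∈ S, c S) {S : Finset ι} (hS : S.Nonempty) :
    c S = layer a S := by
  -- `c ≤ layer a` on nonempty sets, and both have the same `#S`-weighted total `∑ j, a j`.
  by_contra hne
  have hlt : ∑ T, #T * c T < ∑ T, #T * layer a T := by
    refine sum_lt_sum (fun T _ => ?_) ⟨S, mem_univ S, ?_⟩
    · rcases T.eq_empty_or_nonempty with rfl | hT
      · simp
      · exact Nat.mul_le_mul_left _ (le_layer_of_chain hc ha hT)
    · exact Nat.mul_lt_mul_of_pos_left (lt_of_le_of_ne (le_layer_of_chain hc ha hS) hne)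
        (card_pos.2 hS)
  simp only [sum_card_mul_eq_sum_sum_mem, sum_layer_of_mem, ← ha] at hlt
  exact lt_irrefl _ hlt

lemma eq_layer_comp_of_chain {κ : Type*} [Fintype κ] {σ : κ → Finset ι}
    (hσ : Function.Injective σ) {c : κ → ℕ}
    (hc : ∀ h k, c h ≠ 0 → c k ≠ 0 → σ h ⊆ σ k ∨ σ k ⊆ σ h)
    {a : ι → ℕ} (ha : ∀ j, a j = ∑ h with j ∈ σ h, c h) {h : κ} (hh : (σ h).Nonempty) :
    c h = layer a (σ h) := by
  let c' : Finset ι → ℕ := fun S => ∑ l with σ l = S, c l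
  have hc' : ∀ k, c' (σ k) = c k := fun k => by
    change ∑ l with σ l = σ k, c l = c k
    rw [show ({l | σ l = σ k} : Finset κ) = {k} by ext; simp [hσ.eq_iff], sum_singleton]
  rw [← hc']
  refine eq_layer_of_chain (fun S T hS hT => ?_) (fun j => ?_) hh
  · obtain ⟨k, hk, hck⟩ := exists_ne_zero_of_sum_ne_zero hS
    obtain ⟨l, hl, hcl⟩ := exists_ne_zero_of_sum_ne_zero hT
    rw [← (mem_filter.1 hk).2, ← (mem_filter.1 hl).2]
    exact hc k l hck hcl
  · rw [ha, ← sum_fiberwise _ σ, sum_filter]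
    refine sum_congr rfl fun S _ => ?_
    split_ifs with hjS
    · rw [filter_filter]
      exact sum_congr (filter_congr fun k _ => ⟨And.right, fun hk => ⟨hk ▸ hjS, hk⟩⟩) fun _ _ => rfl
    · refine sum_eq_zero fun k hk => ?_
      simp only [mem_filter] at hk
      exact absurd (hk.2 ▸ hk.1.2) hjS

end LayerCake

section LayerProd

variable {ι : Type*} [Fintype ι] [DecidableEq ι]

lemma mem_primeFactors_of_layer_ne_zero {y : ι → ℕ} {S : Finset ι} {p : ℕ}
    (h : layer (fun j => (y j).factorization p) S ≠ 0) :
    p ∈ univ.biUnion fun j => (y j).primeFactors := by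
  contrapose! h
  have hp : (fun j => (y j).factorization p) = 0 := funext fun j => by
    simpa [← Nat.support_factorization] using fun hj => h (mem_biUnion.2 ⟨j, mem_univ j, hj⟩)
  rw [hp, layer_zero]

noncomputable def layerFactorization (y : ι → ℕ) (S : Finset ι) : ℕ →₀ ℕ :=
  Finsupp.onFinset _ (fun p => layer (fun j => (y j).factorization p) S)
    fun _ => mem_primeFactors_of_layer_ne_zero

noncomputable def layerProd (y : ι → ℕ) (S : Finset ι) : ℕ := (layerFactorization y S).prod (· ^ ·)

lemma prime_of_mem_support_layerFactorization {y : ι → ℕ} {S : Finset ι} {p : ℕ}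
    (hp : p ∈ (layerFactorization y S).support) : p.Prime := by
  obtain ⟨j, -, hj⟩ := mem_biUnion.1 (Finsupp.support_onFinset_subset hp)
  exact Nat.prime_of_mem_primeFactors hj

lemma factorization_layerProd (y : ι → ℕ) (S : Finset ι) (p : ℕ) :
    (layerProd y S).factorization p = layer (fun j => (y j).factorization p) S := by
  rw [layerProd,
    Nat.prod_pow_factorization_eq_self fun _ => prime_of_mem_support_layerFactorization]
  rfl

lemma layerProd_pos (y : ι → ℕ) (S : Finset ι) : 0 < layerProd y S :=
  Nat.prod_pow_pos_of_zero_notMem_support fun h0 =>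
    Nat.not_prime_zero (prime_of_mem_support_layerFactorization h0)

lemma coprime_layerProd {y : ι → ℕ} {S T : Finset ι} (hST : ¬S ⊆ T) (hTS : ¬T ⊆ S) :
    Nat.Coprime (layerProd y S) (layerProd y T) := by
  by_contra hcop
  obtain ⟨p, hp, hpS, hpT⟩ := Nat.Prime.not_coprime_iff_dvd.1 hcop
  have hS := hp.factorization_pos_of_dvd (layerProd_pos y S).ne' hpS
  have hT := hp.factorization_pos_of_dvd (layerProd_pos y T).ne' hpT
  rw [factorization_layerProd] at hS hT
  obtain ⟨s, rfl⟩ := exists_levelSet_eq_of_layer_ne_zero hS.ne'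
  obtain ⟨t, rfl⟩ := exists_levelSet_eq_of_layer_ne_zero hT.ne'
  rcases le_total s t with hst | hts
  · exact hTS (levelSet_antitone _ hst)
  · exact hST (levelSet_antitone _ hts)

end LayerProd

section Binary

variable {n : ℕ}

def bitSet (n m : ℕ) : Finset (Fin n) := {j | m.testBit j}

@[simp] lemma mem_bitSet {m : ℕ} {j : Fin n} : j ∈ bitSet n m ↔ m.testBit j := by
  simp [bitSet]

lemma epsb_eq_ite (m : ℕ) (j : Fin n) : epsb m j = if j ∈ bitSet n m then 1 else 0 := by
  simp [epsb]

lemma dom_iff_bitSet_subset {m₁ m₂ : ℕ} : Dom n m₁ m₂ ↔ bitSet n m₁ ⊆ bitSet n m₂ := by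
  have key (j : Fin n) : epsb m₁ j ≤ epsb m₂ j ↔ (j ∈ bitSet n m₁ → j ∈ bitSet n m₂) := by
    rw [epsb_eq_ite, epsb_eq_ite]
    split_ifs <;> simp_all
  exact ⟨fun hd j => (key j).1 (hd j j.2), fun hd j hj => (key ⟨j, hj⟩).2 (@hd ⟨j, hj⟩)⟩

lemma testBit_eq_false_of_lt_two_pow {m i : ℕ} (hm : m < 2 ^ n) (hi : n ≤ i) :
    m.testBit i = false :=
  Nat.testBit_lt_two_pow (hm.trans_le (Nat.pow_le_pow_right two_pos hi))

lemma bitSet_injOn : Set.InjOn (bitSet n) (Set.Iio (2 ^ n)) := by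
  intro m₁ h₁ m₂ h₂ h
  refine Nat.eq_of_testBit_eq fun i => ?_
  by_cases hi : i < n
  · simpa using congrArg (⟨i, hi⟩ ∈ ·) h
  · rw [testBit_eq_false_of_lt_two_pow h₁ (not_lt.1 hi),
      testBit_eq_false_of_lt_two_pow h₂ (not_lt.1 hi)]

lemma bitSet_nonempty {m : ℕ} (h0 : m ≠ 0) (hm : m < 2 ^ n) : (bitSet n m).Nonempty := by
  obtain ⟨i, hi⟩ := Nat.exists_testBit_of_ne_zero h0
  have hin : i < n := by
    by_contra hni
    rw [testBit_eq_false_of_lt_two_pow hm (not_lt.1 hni)] at hi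
    exact Bool.false_ne_true hi
  exact ⟨⟨i, hin⟩, mem_bitSet.2 hi⟩

def indexSet (n : ℕ) (h : Fin (2 ^ n - 1)) : Finset (Fin n) := bitSet n (h + 1)

lemma succ_lt_two_pow (h : Fin (2 ^ n - 1)) : (h : ℕ) + 1 < 2 ^ n := by
  have := h.2
  have := Nat.one_le_two_pow (n := n)
  omega

lemma dom_iff_indexSet_subset {h k : Fin (2 ^ n - 1)} :
    Dom n (h.1 + 1) (k.1 + 1) ↔ indexSet n h ⊆ indexSet n k :=
  dom_iff_bitSet_subset

lemma indexSet_injective : Function.Injective (indexSet n) := fun h₁ h₂ h =>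
  Fin.ext (Nat.succ_injective (bitSet_injOn (succ_lt_two_pow h₁) (succ_lt_two_pow h₂) h))

lemma indexSet_nonempty (h : Fin (2 ^ n - 1)) : (indexSet n h).Nonempty :=
  bitSet_nonempty (Nat.succ_ne_zero _) (succ_lt_two_pow h)

lemma image_indexSet : univ.image (indexSet n) = univ.erase ∅ := by
  refine eq_of_subset_of_card_le (fun S hS => ?_) ?_
  · obtain ⟨h, -, rfl⟩ := mem_image.1 hS
    exact mem_erase.2 ⟨(indexSet_nonempty h).ne_empty, mem_univ _⟩
  · rw [card_image_of_injective _ indexSet_injective, card_erase_of_mem (mem_univ _)]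
    simp

lemma sum_indexSet {w : Finset (Fin n) → ℕ} (hw : w ∅ = 0) :
    ∑ h, w (indexSet n h) = ∑ S, w S := by
  rw [← sum_image indexSet_injective.injOn, image_indexSet, sum_erase _ hw]

lemma sum_layer_indexSet_of_mem (a : Fin n → ℕ) (j : Fin n) :
    ∑ h with j ∈ indexSet n h, layer a (indexSet n h) = a j := by
  rw [sum_filter, sum_indexSet (w := fun S => if j ∈ S then layer a S else 0) (by simp),
    ← sum_filter, sum_layer_of_mem]

end Binary

section Factorization

variable {n : ℕ}

lemma factorization_prod_pow_epsb {z : Fin (2 ^ n - 1) → ℕ} (hz : ∀ h, z h ≠ 0) (j : Fin n)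
    (p : ℕ) : (∏ h, z h ^ epsb (h.1 + 1) j.1).factorization p =
      ∑ h with j ∈ indexSet n h, (z h).factorization p := by
  rw [Nat.factorization_prod fun h _ => pow_ne_zero _ (hz h), sum_apply', sum_filter]
  refine sum_congr rfl fun h _ => ?_
  rw [Nat.factorization_pow, Finsupp.smul_apply, epsb_eq_ite, indexSet]
  split_ifs <;> simp

lemma Reduced.subset_or_subset {z : Fin (2 ^ n - 1) → ℕ} (hr : Reduced n z) {p : ℕ}
    {h k : Fin (2 ^ n - 1)} (hh : (z h).factorization p ≠ 0) (hk : (z k).factorization p ≠ 0) :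
    indexSet n h ⊆ indexSet n k ∨ indexSet n k ⊆ indexSet n h := by
  by_contra hhk
  rw [not_or, ← dom_iff_indexSet_subset, ← dom_iff_indexSet_subset] at hhk
  have hp : p.Prime := Nat.prime_of_mem_primeFactors (Nat.support_factorization _ ▸
    Finsupp.mem_support_iff.2 hh)
  have := Nat.dvd_gcd (Nat.dvd_of_factorization_pos hh) (Nat.dvd_of_factorization_pos hk)
  rw [hr h k hhk.1 hhk.2] at this
  exact hp.one_lt.ne' (Nat.dvd_one.1 this)

lemma factorization_eq_layer {z : Fin (2 ^ n - 1) → ℕ} (hz : ∀ h, z h ≠ 0) (hr : Reduced n z)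
    (p : ℕ) (h : Fin (2 ^ n - 1)) :
    (z h).factorization p = layer (fun j : Fin n =>
      (∏ h, z h ^ epsb (h.1 + 1) j.1).factorization p) (indexSet n h) :=
  eq_layer_comp_of_chain indexSet_injective (fun _ _ => hr.subset_or_subset)
    (fun j => factorization_prod_pow_epsb hz j p) (indexSet_nonempty h)

end Factorization

theorem statement0_general (n : ℕ) :
    Set.BijOn (fun (z : Fin (2^n - 1) → ℕ) (j : Fin n) => ∏ h, z h ^ epsb (h.1+1) j.1)
      {z | (∀ h, 0 < z h) ∧ Reduced n z}
      {y : Fin n → ℕ | ∀ j, 0 < y j} := by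
  refine ⟨fun z hz j => prod_pos fun h _ => pow_pos (hz.1 h) _, ?_, fun y hy => ?_⟩
  · rintro z ⟨hz, hzr⟩ z' ⟨hz', hzr'⟩ hzz'
    funext h
    refine Nat.eq_of_factorization_eq (hz h).ne' (hz' h).ne' fun p => ?_
    rw [funext_iff] at hzz'
    simp only [factorization_eq_layer (fun h => (hz h).ne') hzr,
      factorization_eq_layer (fun h => (hz' h).ne') hzr', hzz']
  · refine ⟨fun h => layerProd y (indexSet n h),
      ⟨fun h => layerProd_pos y _, fun h ℓ hhℓ hℓh => coprime_layerProd ?_ ?_⟩, funext fun j => ?_⟩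
    · rwa [← dom_iff_indexSet_subset]
    · rwa [← dom_iff_indexSet_subset]
    refine Nat.eq_of_factorization_eq (prod_pos fun h _ => pow_pos (layerProd_pos y _) _).ne'
      (hy j).ne' fun p => ?_
    simp only [factorization_prod_pow_epsb (fun h => (layerProd_pos y _).ne'),
      factorization_layerProd, sum_layer_indexSet_of_mem]

/-- The map sending a reduced `N`-tuple `(z_1,…,z_N)` of positive integers
(`N = 2^n-1`) to `(y_1,…,y_n)` with `y_j = ∏_h z_h^{ε_j(h)}` is a bijection onto
the set of `n`-tuples of positive integers. -/
theorem statement0 (n : ℕ) (hn : 2 ≤ n) :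
    Set.BijOn (fun (z : Fin (2^n - 1) → ℕ) (j : Fin n) => ∏ h, z h ^ epsb (h.1+1) j.1)
      {z | (∀ h, 0 < z h) ∧ Reduced n z}
      {y : Fin n → ℕ | ∀ j, 0 < y j} :=
  statement0_general n
end

section
/- Let $n \geq 2$, $N = 2^n-1$, and let $(z_1,\dots,z_N)$ be a reduced $N$-tuple of positive integers with associated $y_j = \prod_{h=1}^N z_h^{\varepsilon_j(h)}$. Then the least common multiple of $y_1,\dots,y_n$ equals $\prod_{h=1}^N z_h$. -/
/-!
For a prime `p`, reducedness makes the indices `h` with `p ∣ z_h` a chain for the domination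
order. Its least element `h₀` is nonzero, so it has a binary digit `j` equal to `1`, and then every
`h` in the chain has digit `j` equal to `1`. Hence `y_j` contains every `z_h` divisible by `p`, so
`p` occurs in `y_j` to the same power as in `∏ z_h`. As each `y_j` divides `∏ z_h`, the lcm of the
`y_j` is `∏ z_h`.
-/

theorem Finset.exists_forall_le_of_isChain {ι α : Type*} [Preorder α] (f : ι → α)
    {s : Finset ι} (hs : s.Nonempty) (hchain : ∀ a ∈ s, ∀ b ∈ s, f a ≤ f b ∨ f b ≤ f a) :
    ∃ a ∈ s, ∀ b ∈ s, f a ≤ f b := by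
  obtain ⟨a, has, hmin⟩ := s.exists_minimalFor f hs
  refine ⟨a, has, fun b hbs => ?_⟩
  rcases hchain a has b hbs with hab | hba
  · exact hab
  · exact hmin hbs hba

theorem Nat.factorization_prod_pow_eq_of_dvd_imp {ι : Type*} [Fintype ι] {z e : ι → ℕ} {p : ℕ}
    (hz : ∀ i, z i ≠ 0) (he : ∀ i, p ∣ z i → e i = 1) :
    (∏ i, z i ^ e i).factorization p = (∏ i, z i).factorization p := by
  rw [Nat.factorization_prod fun i _ => pow_ne_zero _ (hz i),
    Nat.factorization_prod fun i _ => hz i, Finsupp.finsetSum_apply, Finsupp.finsetSum_apply]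
  refine Finset.sum_congr rfl fun i _ => ?_
  by_cases hpi : p ∣ z i
  · rw [he i hpi, pow_one]
  · simp [Nat.factorization_eq_zero_of_not_dvd hpi]

theorem epsb_le_one (h j : ℕ) : epsb h j ≤ 1 := by
  unfold epsb; split <;> omega

theorem dom_iff_le (n h ℓ : ℕ) :
    Dom n h ℓ ↔ (fun j : Fin n => epsb h j) ≤ fun j : Fin n => epsb ℓ j :=
  ⟨fun hd j => hd j j.2, fun hle j hj => hle ⟨j, hj⟩⟩

theorem exists_epsb_eq_one {n h : ℕ} (h0 : h ≠ 0) (hlt : h < 2 ^ n) :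
    ∃ j : Fin n, epsb h j = 1 := by
  obtain ⟨i, hi, -⟩ := Nat.exists_most_significant_bit h0
  have hin : i < n :=
    (Nat.pow_lt_pow_iff_right one_lt_two).1 ((Nat.ge_two_pow_of_testBit hi).trans_lt hlt)
  exact ⟨⟨i, hin⟩, by simp [epsb, hi]⟩

theorem exists_epsb_eq_one_of_chain {n : ℕ} {S : Finset (Fin (2 ^ n - 1))} (hS : S.Nonempty)
    (hchain : ∀ a ∈ S, ∀ b ∈ S, Dom n (a.1 + 1) (b.1 + 1) ∨ Dom n (b.1 + 1) (a.1 + 1)) :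
    ∃ j : Fin n, ∀ h ∈ S, epsb (h.1 + 1) j = 1 := by
  simp only [dom_iff_le] at hchain
  obtain ⟨h₀, -, hmin⟩ := S.exists_forall_le_of_isChain _ hS hchain
  obtain ⟨j, hj⟩ := exists_epsb_eq_one (Nat.succ_ne_zero h₀.1) (by omega : h₀.1 + 1 < 2 ^ n)
  refine ⟨j, fun h hh => le_antisymm (epsb_le_one _ _) ?_⟩
  exact hj.symm.trans_le (hmin h hh j)

theorem Reduced.dom_or_dom_of_dvd {n : ℕ} {z : Fin (2 ^ n - 1) → ℕ} (hred : Reduced n z)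
    {p : ℕ} (hp : p.Prime) {a b : Fin (2 ^ n - 1)} (ha : p ∣ z a) (hb : p ∣ z b) :
    Dom n (a.1 + 1) (b.1 + 1) ∨ Dom n (b.1 + 1) (a.1 + 1) := by
  by_contra! hinc
  exact hp.not_dvd_one (hred a b hinc.1 hinc.2 ▸ Nat.dvd_gcd ha hb)

theorem Reduced.exists_factorization_prod_pow_epsb_eq {n : ℕ} {z : Fin (2 ^ n - 1) → ℕ}
    (hz : ∀ h, z h ≠ 0) (hred : Reduced n z) {p : ℕ} (hp : p.Prime) (hdvd : p ∣ ∏ h, z h) :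
    ∃ j : Fin n, (∏ h, z h ^ epsb (h.1 + 1) j).factorization p = (∏ h, z h).factorization p := by
  classical
  obtain ⟨h, -, hph⟩ := (Prime.dvd_finsetProd_iff hp.prime z).1 hdvd
  obtain ⟨j, hj⟩ := exists_epsb_eq_one_of_chain (S := {h | p ∣ z h}) ⟨h, by simpa using hph⟩
    fun a ha b hb => hred.dom_or_dom_of_dvd hp (by simpa using ha) (by simpa using hb)
  exact ⟨j, Nat.factorization_prod_pow_eq_of_dvd_imp hz fun h hph => hj h (by simpa using hph)⟩

theorem statement1_general (n : ℕ) (z : Fin (2^n - 1) → ℕ)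
    (hz : ∀ h, 0 < z h) (hred : Reduced n z) (y : Fin n → ℕ)
    (hy : ∀ j : Fin n, y j = ∏ h, z h ^ epsb (h.1+1) j.1) :
    Finset.univ.lcm y = ∏ h, z h := by
  have hz0 : ∀ h, z h ≠ 0 := fun h => (hz h).ne'
  have hprod : ∏ h, z h ≠ 0 := Finset.prod_ne_zero_iff.2 fun h _ => hz0 h
  have hy_dvd : ∀ j, y j ∣ ∏ h, z h := fun j => hy j ▸ Finset.prod_dvd_prod_of_dvd _ _
    fun h _ => (pow_dvd_pow (z h) (epsb_le_one _ _)).trans (pow_one (z h)).dvd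
  have hlcm_dvd : Finset.univ.lcm y ∣ ∏ h, z h := Finset.lcm_dvd fun j _ => hy_dvd j
  have hlcm : Finset.univ.lcm y ≠ 0 := ne_zero_of_dvd_ne_zero hprod hlcm_dvd
  refine Nat.dvd_antisymm hlcm_dvd
    ((Nat.factorization_prime_le_iff_dvd hprod hlcm).1 fun p hp => ?_)
  by_cases hdvd : p ∣ ∏ h, z h
  · obtain ⟨j, hj⟩ := hred.exists_factorization_prod_pow_epsb_eq hz0 hp hdvd
    have hyj : y j ∣ Finset.univ.lcm y := Finset.dvd_lcm (Finset.mem_univ j)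
    rw [← hj, ← hy j]
    exact (Nat.factorization_le_iff_dvd (ne_zero_of_dvd_ne_zero hlcm hyj) hlcm).2 hyj p
  · simp [Nat.factorization_eq_zero_of_not_dvd hdvd]

/-- For a reduced tuple `(z_1,…,z_N)` of positive integers with
`y_j = ∏_h z_h^{ε_j(h)}`, the lcm of `y_1,…,y_n` equals `∏_h z_h`. -/
theorem statement1 (n : ℕ) (hn : 2 ≤ n) (z : Fin (2^n - 1) → ℕ)
    (hz : ∀ h, 0 < z h) (hred : Reduced n z) (y : Fin n → ℕ)
    (hy : ∀ j : Fin n, y j = ∏ h, z h ^ epsb (h.1+1) j.1) :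
    Finset.univ.lcm y = ∏ h, z h :=
  statement1_general n z hz hred y hy
end

section
/- For every integer $n \geq 1$ there is a unique polynomial $P_n$ with integer coefficients such that for all real $x$ with $|x| < 1$, $\sum_{k \geq 0} (k+1)^n x^k = P_n(x)/(1-x)^{n+1}$. Moreover $P_n$ has degree $n-1$ and is monic. -/
/-!
Multiplying `∑ (k+1)^n x^k` by `(1 - x)^(n+1) = ∑ (-1)^i C(n+1,i) x^i` (a Cauchy product of
absolutely convergent series) gives the power series whose `m`-th coefficient is the Eulerian
number `A(n,m) = ∑_{i ≤ m} (-1)^i C(n+1,i) (m+1-i)^n`. For `m ≥ n`, extending this sum to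
`i ≤ max (m+1) (n+1)` only adds zero terms, and the result is the `(n+1)`-st finite difference
of `t ↦ t^n`, which vanishes. For `m = n - 1` the extension adds the term `i = n + 1`, equal to
`-1`, so `A(n,n-1) = 1`. Uniqueness holds because two polynomials agreeing on `(-1, 1)` are equal.
-/

open Finset Polynomial Filter Asymptotics

theorem sum_range_neg_one_pow_mul_choose_mul_sub_pow {R : Type*} [CommRing R] (n : ℕ) (y : R) :
    ∑ i ∈ range (n + 2), (-1) ^ i * ((n + 1).choose i : R) * (y - i) ^ n = 0 := by
  have h := congr_fun (fwdDiff_iter_pow_eq_zero_of_lt (R := R) (Nat.lt_succ_self n)) (y - (n + 1))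
  rw [fwdDiff_iter_eq_sum_shift, ← sum_range_reflect, Pi.zero_apply] at h
  rw [← h]
  refine sum_congr rfl fun i hi ↦ ?_
  have hi : i ≤ n + 1 := Nat.lt_succ_iff.mp (mem_range.mp hi)
  rw [show n.succ + 1 - 1 - i = n + 1 - i by omega, Nat.succ_eq_add_one, Nat.sub_sub_self hi,
    Nat.choose_symm hi, nsmul_eq_mul, Nat.cast_sub hi, zsmul_eq_mul]
  push_cast
  ring

def eulerianNumber (n m : ℕ) : ℤ :=
  ∑ i ∈ range (m + 1), (-1) ^ i * (n + 1).choose i * ((m + 1 - i : ℕ) : ℤ) ^ n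

noncomputable def eulerianPoly (n : ℕ) : ℤ[X] :=
  PowerSeries.trunc n (PowerSeries.mk (eulerianNumber n))

section EulerianPoly

variable {n : ℕ}

theorem eulerianNumber_eq_sum_range (hn : n ≠ 0) (m : ℕ) :
    eulerianNumber n m =
      ∑ i ∈ range (m + 2), (-1) ^ i * (n + 1).choose i * ((m : ℤ) + 1 - i) ^ n := by
  rw [sum_range_succ, Nat.cast_add_one, sub_self, zero_pow hn, mul_zero, add_zero, eulerianNumber]
  refine sum_congr rfl fun i hi ↦ ?_
  rw [Nat.cast_sub (mem_range.mp hi).le]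
  push_cast
  ring

theorem eulerianNumber_eq_zero (hn : n ≠ 0) {m : ℕ} (hm : n ≤ m) : eulerianNumber n m = 0 := by
  rw [eulerianNumber_eq_sum_range hn,
    ← sum_range_neg_one_pow_mul_choose_mul_sub_pow n ((m : ℤ) + 1)]
  symm
  refine sum_subset (range_subset_range.mpr (by omega)) fun i _ hi ↦ ?_
  rw [Nat.choose_eq_zero_of_lt (by simp at hi; omega), Nat.cast_zero, mul_zero, zero_mul]

theorem eulerianNumber_pred (hn : n ≠ 0) : eulerianNumber n (n - 1) = 1 := by
  obtain ⟨k, rfl⟩ := Nat.exists_eq_add_one_of_ne_zero hn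
  have h := sum_range_neg_one_pow_mul_choose_mul_sub_pow (k + 1) ((k : ℤ) + 1)
  rw [sum_range_succ, ← eulerianNumber_eq_sum_range hn, Nat.choose_self] at h
  have hlast :
      (-1 : ℤ) ^ (k + 2) * ((1 : ℕ) : ℤ) * ((k : ℤ) + 1 - ((k + 2 : ℕ) : ℤ)) ^ (k + 1) = -1 := by
    rw [show (k : ℤ) + 1 - ((k + 2 : ℕ) : ℤ) = -1 by push_cast; ring, Nat.cast_one, mul_one,
      ← pow_add, Odd.neg_one_pow ⟨k + 1, by ring⟩]
  rw [Nat.add_sub_cancel]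
  linarith

theorem coeff_eulerianPoly (m : ℕ) :
    (eulerianPoly n).coeff m = if m < n then eulerianNumber n m else 0 := by
  simp [eulerianPoly, PowerSeries.coeff_trunc]

theorem natDegree_eulerianPoly (hn : n ≠ 0) : (eulerianPoly n).natDegree = n - 1 := by
  refine le_antisymm (natDegree_le_iff_coeff_eq_zero.mpr fun m hm ↦ ?_)
    (le_natDegree_of_ne_zero ?_)
  · rw [coeff_eulerianPoly, if_neg (by omega)]
  · rw [coeff_eulerianPoly, if_pos (by omega), eulerianNumber_pred hn]
    exact one_ne_zero

theorem monic_eulerianPoly (hn : n ≠ 0) : (eulerianPoly n).Monic := by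
  rw [Monic, leadingCoeff, natDegree_eulerianPoly hn, coeff_eulerianPoly, if_pos (by omega),
    eulerianNumber_pred hn]

end EulerianPoly

theorem summable_norm_add_one_pow_mul_geometric_of_norm_lt_one {R : Type*} [NormedRing R]
    (n : ℕ) {r : R} (hr : ‖r‖ < 1) : Summable fun k : ℕ ↦ ‖((k : R) + 1) ^ n * r ^ k‖ := by
  have hu : (fun k : ℕ ↦ (((k + 1) ^ n : ℕ) : ℝ)) =O[atTop] fun k ↦ ((k ^ n : ℕ) : ℝ) := by
    refine IsBigO.of_bound (2 ^ n) ?_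
    filter_upwards [eventually_ge_atTop 1] with k hk
    simp only [Real.norm_natCast]
    norm_cast
    calc (k + 1) ^ n ≤ (2 * k) ^ n := by gcongr; omega
      _ = 2 ^ n * k ^ n := mul_pow 2 k n
  simpa using summable_norm_mul_geometric_of_norm_lt_one hr hu

theorem hasSum_neg_one_pow_mul_choose_mul_pow {R : Type*} [CommRing R] [TopologicalSpace R]
    (d : ℕ) (x : R) : HasSum (fun i ↦ (-1) ^ i * (d.choose i : R) * x ^ i) ((1 - x) ^ d) := by
  have hbinom : (1 - x) ^ d = ∑ i ∈ range (d + 1), (-1) ^ i * (d.choose i : R) * x ^ i := by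
    rw [sub_eq_add_neg, add_comm, add_pow]
    refine sum_congr rfl fun i _ ↦ ?_
    rw [neg_pow, one_pow, mul_one]
    ring
  rw [hbinom]
  exact hasSum_sum_of_ne_finset_zero fun i hi ↦ by
    rw [Nat.choose_eq_zero_of_lt (by simpa using hi), Nat.cast_zero, mul_zero, zero_mul]

theorem one_sub_pow_mul_tsum_add_one_pow_mul_pow {R : Type*} [NormedCommRing R] [CompleteSpace R]
    (n : ℕ) {x : R} (hx : ‖x‖ < 1) :
    (1 - x) ^ (n + 1) * ∑' k : ℕ, ((k : R) + 1) ^ n * x ^ k =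
      ∑' m, (eulerianNumber n m : R) * x ^ m := by
  have hfin : Summable fun i ↦ ‖(-1) ^ i * ((n + 1).choose i : R) * x ^ i‖ :=
    summable_of_ne_finset_zero (s := range (n + 2)) fun i hi ↦ by
      rw [Nat.choose_eq_zero_of_lt (by simp at hi; omega), Nat.cast_zero, mul_zero, zero_mul,
        norm_zero]
  rw [← (hasSum_neg_one_pow_mul_choose_mul_pow (n + 1) x).tsum_eq,
    tsum_mul_tsum_eq_tsum_sum_range_of_summable_norm hfin
      (summable_norm_add_one_pow_mul_geometric_of_norm_lt_one n hx)]
  refine tsum_congr fun m ↦ ?_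
  rw [eulerianNumber, Int.cast_sum, sum_mul]
  refine sum_congr rfl fun i hi ↦ ?_
  have him : i ≤ m := Nat.lt_succ_iff.mp (mem_range.mp hi)
  rw [show m + 1 - i = m - i + 1 by omega, ← Nat.add_sub_cancel' him, pow_add,
    Nat.add_sub_cancel_left]
  push_cast
  ring

theorem tsum_add_one_pow_mul_pow_eq_aeval_eulerianPoly_div {𝕜 : Type*} [NormedField 𝕜]
    [CompleteSpace 𝕜] {n : ℕ} (hn : n ≠ 0) {x : 𝕜} (hx : ‖x‖ < 1) :
    ∑' k : ℕ, ((k : 𝕜) + 1) ^ n * x ^ k = aeval x (eulerianPoly n) / (1 - x) ^ (n + 1) := by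
  have hx1 : (1 - x) ^ (n + 1) ≠ 0 :=
    pow_ne_zero _ (sub_ne_zero.mpr (by rintro rfl; simp at hx))
  rw [eq_div_iff hx1, mul_comm, one_sub_pow_mul_tsum_add_one_pow_mul_pow n hx,
    tsum_eq_sum (s := range n) fun m hm ↦ by
      rw [eulerianNumber_eq_zero hn (by simpa using hm), Int.cast_zero, zero_mul],
    aeval_eq_sum_range' (n := n) (by rw [natDegree_eulerianPoly hn]; omega)]
  refine sum_congr rfl fun m hm ↦ ?_
  rw [coeff_eulerianPoly, if_pos (mem_range.mp hm), zsmul_eq_mul]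

/-- For every `n ≥ 1` there is a unique integer polynomial `P` such that for all real
`x` with `|x| < 1`, `∑_{k≥0} (k+1)^n x^k = P(x)/(1-x)^{n+1}`; moreover `P` is monic
of degree `n - 1`. -/
theorem statement3 (n : ℕ) (hn : 1 ≤ n) :
    ∃! P : Polynomial ℤ,
      (∀ x : ℝ, |x| < 1 →
        ∑' k : ℕ, ((k : ℝ) + 1) ^ n * x ^ k = (Polynomial.aeval x P) / (1 - x) ^ (n + 1)) ∧
      P.natDegree = n - 1 ∧ P.Monic := by
  have hn₀ : n ≠ 0 := Nat.one_le_iff_ne_zero.mp hn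
  have hsum (x : ℝ) (hx : |x| < 1) := tsum_add_one_pow_mul_pow_eq_aeval_eulerianPoly_div hn₀
    (show ‖x‖ < 1 by rwa [Real.norm_eq_abs])
  refine ⟨eulerianPoly n, ⟨hsum, natDegree_eulerianPoly hn₀, monic_eulerianPoly hn₀⟩, ?_⟩
  rintro Q ⟨hQ, -, -⟩
  refine map_injective (algebraMap ℤ ℝ) (RingHom.injective_int _)
    (eq_of_infinite_eval_eq _ _ ((Set.Ioo_infinite (by norm_num : (-1 : ℝ) < 1)).mono ?_))
  intro x hx_mem
  have hx : |x| < 1 := abs_lt.mpr hx_mem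
  have hx1 : (1 - x) ^ (n + 1) ≠ 0 := pow_ne_zero _ (by linarith [(abs_lt.mp hx).2])
  simpa only [Set.mem_ofPred_eq, eval_map_algebraMap] using
    (div_left_inj' hx1).mp ((hQ x hx).symm.trans (hsum x hx))
end

section
/- Let $n \geq 2$. For each prime $p$ and real $s > 1$, the Euler factor $\left(1 - p^{-s}\right)^{2^n} \sum_{k \geq 0} (k+1)^n p^{-ks}$ tends to $1$ as $p \to \infty$ uniformly for $s \geq 1$, and in fact equals $1 + O_n(p^{-2s})$; consequently the infinite product $\prod_p (1 - 1/p)^{2^n} \sum_{k\geq 0} (k+1)^n p^{-k}$ converges to a positive real number. -/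
/-!
Write `x = p^{-s} ≤ 1/2` and `m = 2^n`. The power series `∑ (k+1)^n x^k` has constant term `1` and
linear coefficient `2^n = m`, so it equals `1 + m x + O(x²)`, while Bernoulli's inequality gives
`(1 - x)^m = 1 - m x + O(x²)`; the linear terms cancel in the product. Taking `x = 1/p`, the
factors are positive and `∑_p |factor - 1| ≪ ∑_p p⁻²` converges, so the logarithms are summable
and the product is the exponential of their sum.
-/

open Finset

theorem summable_add_one_pow_mul_geometric_of_norm_lt_one {R : Type*} [NormedCommRing R]
    [HasSummableGeomSeries R] (n : ℕ) {r : R} (hr : ‖r‖ < 1) :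
    Summable fun k : ℕ => ((k : R) + 1) ^ n * r ^ k := by
  simp_rw [add_pow, one_pow, mul_one, sum_mul]
  refine summable_sum fun j _ => ?_
  exact ((summable_pow_mul_geometric_of_norm_lt_one j hr).mul_right (n.choose j : R)).congr
    fun k => by ring

section NonnegCoefficients

variable {a : ℕ → ℝ} {r x : ℝ}

theorem summable_mul_pow_of_le (ha : ∀ k, 0 ≤ a k) (hr : Summable fun k => a k * r ^ k)
    (hx0 : 0 ≤ x) (hxr : x ≤ r) : Summable fun k => a k * x ^ k :=
  hr.of_nonneg_of_le (fun k => mul_nonneg (ha k) (pow_nonneg hx0 k))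
    fun k => mul_le_mul_of_nonneg_left (pow_le_pow_left₀ hx0 hxr k) (ha k)

theorem tsum_mul_pow_le_of_le (ha : ∀ k, 0 ≤ a k) (hr : Summable fun k => a k * r ^ k)
    (hx0 : 0 ≤ x) (hxr : x ≤ r) : ∑' k, a k * x ^ k ≤ ∑' k, a k * r ^ k :=
  (summable_mul_pow_of_le ha hr hx0 hxr).tsum_le_tsum
    (fun k => mul_le_mul_of_nonneg_left (pow_le_pow_left₀ hx0 hxr k) (ha k)) hr

end NonnegCoefficients

theorem Summable.mul_pow_nat_add {a : ℕ → ℝ} {r : ℝ} (hr0 : r ≠ 0)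
    (hr : Summable fun k => a k * r ^ k) (j : ℕ) : Summable fun k => a (k + j) * r ^ k :=
  (((summable_nat_add_iff j).2 hr).mul_left (r ^ j)⁻¹).congr fun k => by
    rw [pow_add]; field_simp

theorem tsum_mul_pow_eq_add_add_sq_mul {a : ℕ → ℝ} {x : ℝ}
    (hs : Summable fun k => a k * x ^ k) :
    ∑' k, a k * x ^ k = a 0 + a 1 * x + x ^ 2 * ∑' k, a (k + 2) * x ^ k := by
  rw [← hs.sum_add_tsum_nat_add 2, ← tsum_mul_left]
  simp only [sum_range_succ, sum_range_zero, pow_add]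
  congr 1
  · ring
  · exact tsum_congr fun k => by ring

theorem one_sub_pow_le (m : ℕ) {x : ℝ} (hx0 : 0 ≤ x) (hx1 : x ≤ 1) :
    (1 - x) ^ m ≤ 1 - m * x + m ^ 2 * x ^ 2 := by
  induction m with
  | zero => simp
  | succ m ih =>
    calc (1 - x) ^ (m + 1) = (1 - x) ^ m * (1 - x) := pow_succ _ _
      _ ≤ (1 - m * x + m ^ 2 * x ^ 2) * (1 - x) := by gcongr
      _ ≤ 1 - (m + 1 : ℕ) * x + (m + 1 : ℕ) ^ 2 * x ^ 2 := by
        push_cast; nlinarith [mul_nonneg (Nat.cast_nonneg (α := ℝ) m) (sq_nonneg x),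
          mul_nonneg (sq_nonneg (m : ℝ)) (pow_nonneg hx0 3)]

theorem Real.multipliable_and_tprod_pos_of_summable_sub_one {ι : Type*} {f : ι → ℝ}
    (hpos : ∀ i, 0 < f i) (hf : Summable fun i => f i - 1) :
    Multipliable f ∧ 0 < ∏' i, f i := by
  have hlog : Summable fun i => Real.log (f i) :=
    (Real.summable_log_one_add_of_summable hf).congr fun i => by rw [add_sub_cancel]
  exact ⟨Real.multipliable_of_summable_log hpos hlog,
    Real.rexp_tsum_eq_tprod hpos hlog ▸ Real.exp_pos _⟩

theorem Real.rpow_neg_le_half {p s : ℝ} (hp : 2 ≤ p) (hs : 1 ≤ s) : p ^ (-s) ≤ 1 / 2 :=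
  calc p ^ (-s) ≤ p ^ (-1 : ℝ) := Real.rpow_le_rpow_of_exponent_le (by linarith) (by linarith)
    _ = p⁻¹ := Real.rpow_neg_one p
    _ ≤ 1 / 2 := by rw [one_div]; exact inv_anti₀ two_pos hp

noncomputable def eulerFactor (n : ℕ) (x : ℝ) : ℝ :=
  (1 - x) ^ (2 ^ n) * ∑' k : ℕ, ((k : ℝ) + 1) ^ n * x ^ k

theorem summable_add_one_pow_mul_half (n : ℕ) :
    Summable fun k : ℕ => ((k : ℝ) + 1) ^ n * (1 / 2) ^ k :=
  summable_add_one_pow_mul_geometric_of_norm_lt_one n (by norm_num)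

theorem abs_eulerFactor_sub_one_le (n : ℕ) :
    ∃ C, ∀ x : ℝ, 0 ≤ x → x ≤ 1 / 2 → |eulerFactor n x - 1| ≤ C * x ^ 2 := by
  have ha : ∀ k : ℕ, (0 : ℝ) ≤ ((k : ℝ) + 1) ^ n := fun k => by positivity
  have hhalf := summable_add_one_pow_mul_half n
  set m : ℕ := 2 ^ n
  set B := ∑' k : ℕ, (((k + 2 : ℕ) : ℝ) + 1) ^ n * (1 / 2) ^ k
  refine ⟨m ^ 2 + m ^ 3 + B, fun x hx0 hx => ?_⟩
  set T := ∑' k : ℕ, (((k + 2 : ℕ) : ℝ) + 1) ^ n * x ^ k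
  have hT0 : 0 ≤ T := tsum_nonneg fun k => by positivity
  have hTB : T ≤ B :=
    tsum_mul_pow_le_of_le (fun k => ha _) (hhalf.mul_pow_nat_add (by norm_num) 2) hx0 hx
  have hsum : ∑' k : ℕ, ((k : ℝ) + 1) ^ n * x ^ k = 1 + m * x + x ^ 2 * T := by
    rw [tsum_mul_pow_eq_add_add_sq_mul (summable_mul_pow_of_le ha hhalf hx0 hx)]
    simp only [Nat.cast_zero, Nat.cast_one, zero_add, one_pow, one_add_one_eq_two, m,
      Nat.cast_pow, Nat.cast_ofNat, T]
  set A := (1 - x) ^ m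
  have hA0 : 0 ≤ A := pow_nonneg (by linarith) m
  have hA1 : A ≤ 1 := pow_le_one₀ (by linarith) (by linarith)
  have hlow : 1 - m * x ≤ A := by
    simpa [← sub_eq_add_neg] using one_add_mul_le_pow (a := -x) (by linarith) m
  have hup : A ≤ 1 - m * x + m ^ 2 * x ^ 2 := one_sub_pow_le m hx0 (by linarith)
  have hmx : (0 : ℝ) ≤ m * x := by positivity
  have hprod_low : (1 - m * x) * (1 + m * x) ≤ A * (1 + m * x) := by gcongr
  have hprod_up : A * (1 + m * x) ≤ (1 - m * x + m ^ 2 * x ^ 2) * (1 + m * x) := by gcongr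
  have hx3 : (m : ℝ) ^ 3 * x ^ 3 ≤ m ^ 3 * x ^ 2 :=
    mul_le_mul_of_nonneg_left (pow_le_pow_of_le_one hx0 (by linarith) (by norm_num))
      (by positivity)
  have htail : A * (x ^ 2 * T) ≤ x ^ 2 * B := by
    calc A * (x ^ 2 * T) ≤ 1 * (x ^ 2 * T) := by gcongr
      _ ≤ x ^ 2 * B := by rw [one_mul]; gcongr
  -- `A (1 + m x + x² T) - 1 = (A (1 + m x) - 1) + A x² T`, and the first summand lies
  -- between `-m² x²` and `m³ x³` by the two bounds on `A`.
  unfold eulerFactor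
  rw [hsum, abs_le]
  have hB : 0 ≤ x ^ 2 * B := mul_nonneg (sq_nonneg x) (hT0.trans hTB)
  have hm3 : (0 : ℝ) ≤ m ^ 3 * x ^ 2 := by positivity
  have hTpos : 0 ≤ A * (x ^ 2 * T) := mul_nonneg hA0 (mul_nonneg (sq_nonneg x) hT0)
  constructor <;> linarith

theorem one_le_tsum_add_one_pow_mul {n : ℕ} {x : ℝ} (hx0 : 0 ≤ x) (hx : x ≤ 1 / 2) :
    1 ≤ ∑' k : ℕ, ((k : ℝ) + 1) ^ n * x ^ k := by
  simpa using (summable_mul_pow_of_le (fun k => by positivity) (summable_add_one_pow_mul_half n)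
    hx0 hx).le_tsum 0 fun k _ => by positivity

theorem eulerFactor_pos (n : ℕ) {x : ℝ} (hx0 : 0 ≤ x) (hx : x ≤ 1 / 2) : 0 < eulerFactor n x :=
  mul_pos (pow_pos (by linarith) _) (one_pos.trans_le (one_le_tsum_add_one_pow_mul hx0 hx))

theorem statement16_general (n : ℕ) :
    (∃ C : ℝ, ∀ p : ℕ, p.Prime → ∀ s : ℝ, 1 ≤ s →
      |(1 - (p : ℝ) ^ (-s)) ^ (2^n) *
          (∑' k : ℕ, ((k : ℝ) + 1) ^ n * ((p : ℝ) ^ (-s)) ^ k) - 1| ≤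
        C * (p : ℝ) ^ (-(2 * s))) ∧
    Multipliable (fun p : {p : ℕ // p.Prime} =>
      (1 - 1 / (p.1 : ℝ)) ^ (2^n) * ∑' k : ℕ, ((k : ℝ) + 1) ^ n * (1 / (p.1 : ℝ)) ^ k) ∧
    0 < ∏' p : {p : ℕ // p.Prime},
      (1 - 1 / (p.1 : ℝ)) ^ (2^n) * ∑' k : ℕ, ((k : ℝ) + 1) ^ n * (1 / (p.1 : ℝ)) ^ k := by
  obtain ⟨C, hC⟩ := abs_eulerFactor_sub_one_le n
  have hp2 (p : ℕ) (hp : p.Prime) : (2 : ℝ) ≤ p := by exact_mod_cast hp.two_le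
  refine ⟨⟨C, fun p hp s hs => ?_⟩, ?_⟩
  · have hsq : ((p : ℝ) ^ (-s)) ^ 2 = (p : ℝ) ^ (-(2 * s)) := by
      rw [← Real.rpow_natCast, ← Real.rpow_mul (by positivity)]; ring_nf
    have h := hC _ (by positivity) (Real.rpow_neg_le_half (hp2 p hp) hs)
    rwa [hsq] at h
  · have hx (p : {p : ℕ // p.Prime}) : 1 / (p.1 : ℝ) ≤ 1 / 2 :=
      one_div_le_one_div_of_le two_pos (hp2 p.1 p.2)
    have hsq : Summable fun p : {p : ℕ // p.Prime} => (1 / (p.1 : ℝ)) ^ 2 := by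
      simp only [div_pow, one_pow]
      exact (Real.summable_one_div_nat_pow.mpr one_lt_two).comp_injective Subtype.val_injective
    exact Real.multipliable_and_tprod_pos_of_summable_sub_one
      (fun p => eulerFactor_pos n (by positivity) (hx p))
      ((hsq.mul_left C).of_norm_bounded fun p => hC _ (by positivity) (hx p))

/-- For `n ≥ 2`: the Euler factor `(1 - p^{-s})^{2^n} ∑_{k≥0} (k+1)^n p^{-ks}` equals
`1 + Oₙ(p^{-2s})` uniformly for `s ≥ 1`, and the infinite product over primes
`∏_p (1 - 1/p)^{2^n} ∑_{k≥0} (k+1)^n p^{-k}` converges to a positive real number. -/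
theorem statement16 (n : ℕ) (hn : 2 ≤ n) :
    (∃ C : ℝ, ∀ p : ℕ, p.Prime → ∀ s : ℝ, 1 ≤ s →
      |(1 - (p : ℝ) ^ (-s)) ^ (2^n) *
          (∑' k : ℕ, ((k : ℝ) + 1) ^ n * ((p : ℝ) ^ (-s)) ^ k) - 1| ≤
        C * (p : ℝ) ^ (-(2 * s))) ∧
    Multipliable (fun p : {p : ℕ // p.Prime} =>
      (1 - 1 / (p.1 : ℝ)) ^ (2^n) * ∑' k : ℕ, ((k : ℝ) + 1) ^ n * (1 / (p.1 : ℝ)) ^ k) ∧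
    0 < ∏' p : {p : ℕ // p.Prime},
      (1 - 1 / (p.1 : ℝ)) ^ (2^n) * ∑' k : ℕ, ((k : ℝ) + 1) ^ n * (1 / (p.1 : ℝ)) ^ k :=
  statement16_general n
end
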